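/- Let H and G be real Hilbert spaces, let L : H → G be a bounded linear operator such that L L* = χ I for some χ > 0, and let φ : G → ℝ ∪ {+∞} be any function. Fix v ∈ H and suppose p ∈ G minimizes the function u ↦ χ φ(u) + (1/2)‖u − L v‖² over G. Then the point w = v + χ⁻¹ L*(p − L v) minimizes the function u ↦ φ(L u) + (1/2)‖u − v‖² over H; in other words, prox_{φ∘L}(v) = v + χ⁻¹ L*(prox_{χφ}(L v) − L v). -/

import Mathlib

/-!
With `w = v + χ⁻¹ L*(p - L v)`, the identity `L L* = χ I` gives `L w = p` and
`‖w - v‖² = χ⁻¹ ‖p - L v‖²`, and `‖L‖² = ‖L L*‖ ≤ χ` gives `‖L u - L v‖² ≤ χ ‖u - v‖²`.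
So `χ` times the objective at `w` is the minimal value `χ φ(p) + ½‖p - L v‖²`, which is at most
`χ φ(L u) + ½‖L u - L v‖² ≤ χ (φ(L u) + ½‖u - v‖²)`; dividing by `χ > 0` is monotone in `EReal`.
-/

open ContinuousLinearMap

theorem EReal.le_of_coe_mul_le_coe_mul {χ : ℝ} (hχ : 0 < χ) {a b : EReal}
    (h : (χ : EReal) * a ≤ χ * b) : a ≤ b := by
  have hcancel : ∀ c : EReal, ((χ⁻¹ : ℝ) : EReal) * (χ * c) = c := fun c => by
    rw [← mul_assoc, ← EReal.coe_mul, inv_mul_cancel₀ hχ.ne', EReal.coe_one, one_mul]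
  rw [← hcancel a, ← hcancel b]
  exact mul_le_mul_of_nonneg_left h (EReal.coe_nonneg.mpr (inv_nonneg.mpr hχ.le))

theorem EReal.coe_mul_add_coe {χ : ℝ} (hχ : 0 ≤ χ) (a : EReal) (r : ℝ) :
    (χ : EReal) * (a + r) = χ * a + ((χ * r : ℝ) : EReal) := by
  rw [EReal.left_distrib_of_nonneg_of_ne_top (EReal.coe_nonneg.mpr hχ) (EReal.coe_ne_top χ),
    EReal.coe_mul]

section SemiOrthogonal

variable {H G : Type*}
  [NormedAddCommGroup H] [InnerProductSpace ℝ H] [CompleteSpace H]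
  [NormedAddCommGroup G] [InnerProductSpace ℝ G] [CompleteSpace G]
  {L : H →L[ℝ] G} {χ : ℝ}

theorem apply_adjoint_apply_of_comp_adjoint_eq_smul
    (hL : L ∘L adjoint L = χ • ContinuousLinearMap.id ℝ G) (y : G) :
    L (adjoint L y) = χ • y := by
  simpa using DFunLike.congr_fun hL y

theorem norm_adjoint_apply_sq_of_comp_adjoint_eq_smul
    (hL : L ∘L adjoint L = χ • ContinuousLinearMap.id ℝ G) (y : G) :
    ‖adjoint L y‖ ^ 2 = χ * ‖y‖ ^ 2 := by
  rw [← real_inner_self_eq_norm_sq, adjoint_inner_left,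
    apply_adjoint_apply_of_comp_adjoint_eq_smul hL, real_inner_smul_right,
    real_inner_self_eq_norm_sq]

theorem opNorm_sq_le_of_comp_adjoint_eq_smul (hχ : 0 ≤ χ)
    (hL : L ∘L adjoint L = χ • ContinuousLinearMap.id ℝ G) : ‖L‖ ^ 2 ≤ χ :=
  calc ‖L‖ ^ 2 = ‖adjoint (adjoint L) ∘L adjoint L‖ := by
        rw [norm_adjoint_comp_self, LinearIsometryEquiv.norm_map, sq]
    _ = ‖χ • ContinuousLinearMap.id ℝ G‖ := by rw [adjoint_adjoint, hL]
    _ = ‖χ‖ * ‖ContinuousLinearMap.id ℝ G‖ := norm_smul _ _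
    _ ≤ χ := by
        rw [Real.norm_of_nonneg hχ]
        exact mul_le_of_le_one_right hχ norm_id_le

theorem norm_apply_sq_le_of_comp_adjoint_eq_smul (hχ : 0 ≤ χ)
    (hL : L ∘L adjoint L = χ • ContinuousLinearMap.id ℝ G) (x : H) :
    ‖L x‖ ^ 2 ≤ χ * ‖x‖ ^ 2 :=
  calc ‖L x‖ ^ 2 ≤ (‖L‖ * ‖x‖) ^ 2 := by gcongr; exact L.le_opNorm x
    _ = ‖L‖ ^ 2 * ‖x‖ ^ 2 := mul_pow _ _ _
    _ ≤ χ * ‖x‖ ^ 2 := by gcongr; exact opNorm_sq_le_of_comp_adjoint_eq_smul hχ hL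

theorem norm_inv_smul_adjoint_apply_sq_of_comp_adjoint_eq_smul
    (hL : L ∘L adjoint L = χ • ContinuousLinearMap.id ℝ G) (y : G) :
    ‖χ⁻¹ • adjoint L y‖ ^ 2 = χ⁻¹ * ‖y‖ ^ 2 := by
  rw [norm_smul, mul_pow, norm_adjoint_apply_sq_of_comp_adjoint_eq_smul hL, Real.norm_eq_abs,
    sq_abs]
  rcases eq_or_ne χ 0 with rfl | hχ
  · simp
  · field_simp

end SemiOrthogonal

theorem prox_composition_semiorthogonal_general
    {H G : Type*}
    [NormedAddCommGroup H] [InnerProductSpace ℝ H] [CompleteSpace H]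
    [NormedAddCommGroup G] [InnerProductSpace ℝ G] [CompleteSpace G]
    (L : H →L[ℝ] G) (χ : ℝ) (hχ : 0 < χ)
    (hL : L ∘L adjoint L = χ • ContinuousLinearMap.id ℝ G)
    (φ : G → EReal)
    (v : H) (p : G)
    (hp : ∀ u : G,
      (χ : EReal) * φ p + (((1 / 2) * ‖p - L v‖ ^ 2 : ℝ) : EReal) ≤
        (χ : EReal) * φ u + (((1 / 2) * ‖u - L v‖ ^ 2 : ℝ) : EReal)) :
    ∀ u : H,
      φ (L (v + χ⁻¹ • adjoint L (p - L v))) +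
          (((1 / 2) * ‖v + χ⁻¹ • adjoint L (p - L v) - v‖ ^ 2 : ℝ) : EReal) ≤
        φ (L u) + (((1 / 2) * ‖u - v‖ ^ 2 : ℝ) : EReal) := by
  intro u
  have hLw : L (v + χ⁻¹ • adjoint L (p - L v)) = p := by
    rw [map_add, map_smul, apply_adjoint_apply_of_comp_adjoint_eq_smul hL, inv_smul_smul₀ hχ.ne',
      add_sub_cancel]
  have hw : ‖v + χ⁻¹ • adjoint L (p - L v) - v‖ ^ 2 = χ⁻¹ * ‖p - L v‖ ^ 2 := by
    rw [add_sub_cancel_left, norm_inv_smul_adjoint_apply_sq_of_comp_adjoint_eq_smul hL]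
  have hLuv : 1 / 2 * ‖L u - L v‖ ^ 2 ≤ χ * (1 / 2 * ‖u - v‖ ^ 2) := by
    rw [← map_sub, mul_left_comm]
    gcongr
    exact norm_apply_sq_le_of_comp_adjoint_eq_smul hχ.le hL _
  refine EReal.le_of_coe_mul_le_coe_mul hχ ?_
  calc (χ : EReal) * (φ (L (v + χ⁻¹ • adjoint L (p - L v))) +
          (((1 / 2) * ‖v + χ⁻¹ • adjoint L (p - L v) - v‖ ^ 2 : ℝ) : EReal))
      = χ * φ p + (((1 / 2) * ‖p - L v‖ ^ 2 : ℝ) : EReal) := by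
        rw [EReal.coe_mul_add_coe hχ.le, hLw, hw]
        congr 2
        field_simp
    _ ≤ χ * φ (L u) + (((1 / 2) * ‖L u - L v‖ ^ 2 : ℝ) : EReal) := hp (L u)
    _ ≤ χ * φ (L u) + ((χ * (1 / 2 * ‖u - v‖ ^ 2) : ℝ) : EReal) := by
        gcongr
    _ = χ * (φ (L u) + (((1 / 2) * ‖u - v‖ ^ 2 : ℝ) : EReal)) :=
        (EReal.coe_mul_add_coe hχ.le _ _).symm

/-- Proximity operator of a composition with a semi-orthogonal linear operator
(`L L* = χ I`, `χ > 0`): if `p` minimizes `u ↦ χ φ(u) + (1/2)‖u - L v‖²` over `G`, then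
`w = v + χ⁻¹ L*(p - L v)` minimizes `u ↦ φ(L u) + (1/2)‖u - v‖²` over `H`; i.e.
`prox_{φ∘L}(v) = v + χ⁻¹ L*(prox_{χφ}(L v) - L v)`. -/
theorem prox_composition_semiorthogonal
    {H G : Type*}
    [NormedAddCommGroup H] [InnerProductSpace ℝ H] [CompleteSpace H]
    [NormedAddCommGroup G] [InnerProductSpace ℝ G] [CompleteSpace G]
    (L : H →L[ℝ] G) (χ : ℝ) (hχ : 0 < χ)
    (hL : L ∘L adjoint L = χ • ContinuousLinearMap.id ℝ G)
    (φ : G → EReal) (hφ : ∀ u, φ u ≠ ⊥)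
    (v : H) (p : G)
    (hp : ∀ u : G,
      (χ : EReal) * φ p + (((1 / 2) * ‖p - L v‖ ^ 2 : ℝ) : EReal) ≤
        (χ : EReal) * φ u + (((1 / 2) * ‖u - L v‖ ^ 2 : ℝ) : EReal)) :
    ∀ u : H,
      φ (L (v + χ⁻¹ • adjoint L (p - L v))) +
          (((1 / 2) * ‖v + χ⁻¹ • adjoint L (p - L v) - v‖ ^ 2 : ℝ) : EReal) ≤
        φ (L u) + (((1 / 2) * ‖u - v‖ ^ 2 : ℝ) : EReal) :=
  prox_composition_semiorthogonal_general L χ hχ hL φ v p hp
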